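/- arXiv:2303.05281 — 2 statements merged into one kernel-verified Lean document; each statement's English description precedes it below -/
import Mathlib

section
/- There is no factorization of Δ² in B₃ into exactly two factors, each of which is conjugate to σ₁^n for some positive integer n; equivalently, Δ² is not a product g₁g₂ of two powers of positive half-twists. -/
/-- The braid relation σ₁σ₂σ₁ = σ₂σ₁σ₂ as a relator in the free group on two generators. -/
def braidRel : Set (FreeGroup (Fin 2)) :=
  {FreeGroup.of 0 * FreeGroup.of 1 * FreeGroup.of 0 *
    (FreeGroup.of 1 * FreeGroup.of 0 * FreeGroup.of 1)⁻¹}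

/-- The braid group B₃ = ⟨σ₁, σ₂ | σ₁σ₂σ₁ = σ₂σ₁σ₂⟩. -/
abbrev B3 : Type := PresentedGroup braidRel

/-- The first Artin generator of B₃. -/
def σ₁ : B3 := PresentedGroup.of 0

/-- The second Artin generator of B₃. -/
def σ₂ : B3 := PresentedGroup.of 1

/-- The Garside element Δ = σ₁σ₂σ₁ of B₃. -/
def Δ : B3 := σ₁ * σ₂ * σ₁

/-!
The representation `ρ : B₃ → SL(2, ℤ)`, `σ₁ ↦ T = [[1, 1], [0, 1]]`, `σ₂ ↦ S T S⁻¹`, sends every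
power of a positive half-twist to a conjugate of a power of `T`, hence to a matrix of trace `2`,
and sends `Δ` to `S⁻¹`, so `Δ²` to `-1`. If `g₁ g₂ = Δ²` then `ρ g₂ = -(ρ g₁)⁻¹`; as `A` and `A⁻¹`
have the same trace in `SL(2)`, the trace of `ρ g₂` would be `-2`.
-/

open Matrix ModularGroup
open scoped MatrixGroups

namespace Matrix.SpecialLinearGroup

variable {n R : Type*} [Fintype n] [DecidableEq n] [CommRing R]

theorem trace_eq_of_isConj {a b : SpecialLinearGroup n R} (h : IsConj a b) :
    trace (a : Matrix n n R) = trace (b : Matrix n n R) := by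
  obtain ⟨c, rfl⟩ := isConj_iff.mp h
  rw [coe_mul, coe_mul, trace_mul_cycle, ← coe_mul, inv_mul_cancel, coe_one, one_mul]

theorem trace_SL2_inv (A : SL(2, R)) :
    trace ((A⁻¹ : SL(2, R)) : Matrix (Fin 2) (Fin 2) R) = trace (A : Matrix (Fin 2) (Fin 2) R) := by
  rw [SL2_inv_expl, trace_fin_two, trace_fin_two, add_comm]
  rfl

end Matrix.SpecialLinearGroup

namespace ModularGroup

theorem trace_T_zpow (k : ℤ) : trace ((T ^ k : SL(2, ℤ)) : Matrix (Fin 2) (Fin 2) ℤ) = 2 := by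
  rw [coe_T_zpow, trace_fin_two_of]
  rfl

theorem mul_ne_neg_one_of_isConj_T_zpow {a b : SL(2, ℤ)} {k l : ℤ}
    (ha : IsConj (T ^ k) a) (hb : IsConj (T ^ l) b) : a * b ≠ -1 := by
  intro hab
  have hb' : b = -a⁻¹ := by rw [← mul_neg_one, ← hab, inv_mul_cancel_left]
  have htrace := SpecialLinearGroup.trace_eq_of_isConj hb
  rw [trace_T_zpow, hb', SpecialLinearGroup.coe_neg, trace_neg, SpecialLinearGroup.trace_SL2_inv,
    ← SpecialLinearGroup.trace_eq_of_isConj ha, trace_T_zpow] at htrace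
  omega

end ModularGroup

theorem braid_rel_T_conj_S_T : T * (S * T * S⁻¹) * T = S * T * S⁻¹ * T * (S * T * S⁻¹) := by
  decide

def braidToSL2 : B3 →* SL(2, ℤ) :=
  PresentedGroup.toGroup (f := ![T, S * T * S⁻¹]) <| by
    simp only [braidRel, Set.mem_singleton_iff, forall_eq, map_mul, map_inv,
      FreeGroup.lift_apply_of]
    simp only [Matrix.cons_val_zero, Matrix.cons_val_one, braid_rel_T_conj_S_T, mul_inv_cancel]

theorem braidToSL2_σ₁ : braidToSL2 σ₁ = T :=
  PresentedGroup.toGroup.of _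

theorem braidToSL2_σ₂ : braidToSL2 σ₂ = S * T * S⁻¹ :=
  PresentedGroup.toGroup.of _

theorem braidToSL2_Δ : braidToSL2 Δ = S⁻¹ := by
  rw [Δ, map_mul, map_mul, braidToSL2_σ₁, braidToSL2_σ₂]
  decide

theorem braidToSL2_Δ_sq : braidToSL2 (Δ ^ 2) = -1 := by
  rw [map_pow, braidToSL2_Δ]
  decide

theorem no_two_factor_factorization :
    ¬ ∃ g₁ g₂ : B3, (∃ n : ℕ, 1 ≤ n ∧ IsConj (σ₁ ^ n) g₁) ∧
      (∃ n : ℕ, 1 ≤ n ∧ IsConj (σ₁ ^ n) g₂) ∧ g₁ * g₂ = Δ ^ 2 := by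
  rintro ⟨g₁, g₂, ⟨n, -, h₁⟩, ⟨m, -, h₂⟩, hprod⟩
  have image_isConj {g : B3} {k : ℕ} (h : IsConj (σ₁ ^ k) g) :
      IsConj (T ^ (k : ℤ)) (braidToSL2 g) := by
    simpa [braidToSL2_σ₁] using braidToSL2.map_isConj h
  refine mul_ne_neg_one_of_isConj_T_zpow (image_isConj h₁) (image_isConj h₂) ?_
  rw [← map_mul, hprod, braidToSL2_Δ_sq]
end

section
/- If (g₁, …, g_k) is a factorization of the identity in SL₂(ℤ) in which every factor g_j is conjugate to S = [[1,1],[0,1]], then k is divisible by 12. -/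
/-- The matrix S = [[1,1],[0,1]] as an element of SL₂(ℤ). -/
def S : Matrix.SpecialLinearGroup (Fin 2) ℤ :=
  ⟨!![1, 1; 0, 1], by norm_num [Matrix.det_fin_two_of]⟩

/-- The matrix T = [[1,0],[-1,1]] as an element of SL₂(ℤ). -/
def T : Matrix.SpecialLinearGroup (Fin 2) ℤ :=
  ⟨!![1, 0; -1, 1], by norm_num [Matrix.det_fin_two_of]⟩

/-!
SL₂(ℤ) has a homomorphism to ℤ/12 sending S to 1 (it is the abelianization). All conjugates of S
have image 1, so a product of k of them equal to the identity forces k ≡ 0 mod 12. The ℤ/3- and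
ℤ/4-components of this homomorphism factor through SL₂(ℤ/3) and SL₂(ℤ/4), where they are given by
explicit formulas in the matrix entries whose multiplicativity is a finite check.
-/

open Matrix MatrixGroups

theorem orderOf_map_dvd_length_of_prod_eq_one {G M : Type*} [Group G] [CommMonoid M]
    (f : G →* M) {s : G} {L : List G} (hprod : L.prod = 1) (hconj : ∀ g ∈ L, IsConj s g) :
    orderOf (f s) ∣ L.length := by
  have hmap : ∀ x ∈ L.map f, x = f s := by
    simp only [List.mem_map]
    rintro _ ⟨g, hg, rfl⟩
    exact (isConj_iff_eq.mp (f.map_isConj (hconj g hg))).symm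
  apply orderOf_dvd_of_pow_eq_one
  rw [← L.length_map f, ← List.prod_eq_pow_card _ _ hmap, ← map_list_prod, hprod, map_one]

namespace Matrix.SpecialLinearGroup

variable {R M : Type*} [CommRing R] [AddGroup M]

/-- The quantifiers in `hφ` are nested so that, over a finite ring, `decide` skips the second
matrix whenever the first one has the wrong determinant. -/
def homOfEntries (φ : R → R → R → R → M)
    (hφ : ∀ a b c d, a * d - b * c = 1 → ∀ a' b' c' d', a' * d' - b' * c' = 1 →
      φ (a * a' + b * c') (a * b' + b * d') (c * a' + d * c') (c * b' + d * d') =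
        φ a b c d + φ a' b' c' d') :
    SL(2, R) →* Multiplicative M :=
  MonoidHom.mk' (fun A ↦ .ofAdd (φ (A 0 0) (A 0 1) (A 1 0) (A 1 1))) fun A B ↦ by
    have hA : A 0 0 * A 1 1 - A 0 1 * A 1 0 = 1 := (det_fin_two A.1).symm.trans A.2
    have hB : B 0 0 * B 1 1 - B 0 1 * B 1 0 = 1 := (det_fin_two B.1).symm.trans B.2
    simp only [coe_mul, mul_apply, Fin.sum_univ_two]
    exact hφ _ _ _ _ hA _ _ _ _ hB

end Matrix.SpecialLinearGroup

def charZMod3 : SL(2, ZMod 3) →* Multiplicative (ZMod 3) :=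
  SpecialLinearGroup.homOfEntries (fun a b c d ↦ if c = 0 then b * d else c * (a + d))
    (by decide +kernel)

-- `2 * c = 0` says that `c` is even.
def charZMod4 : SL(2, ZMod 4) →* Multiplicative (ZMod 4) :=
  SpecialLinearGroup.homOfEntries
    (fun a b c d ↦ if 2 * c = 0 then b * d + c + 1 - d else c * (a + d + 1))
    (by decide +kernel)

theorem dvd_length_of_prod_eq_one_of_isConj_S {n : ℕ} (χ : SL(2, ℤ) →* Multiplicative (ZMod n))
    (hχ : χ S = .ofAdd 1) {L : List SL(2, ℤ)} (hprod : L.prod = 1)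
    (hfac : ∀ g ∈ L, IsConj S g) : n ∣ L.length := by
  simpa [hχ, orderOf_ofAdd_eq_addOrderOf] using orderOf_map_dvd_length_of_prod_eq_one χ hprod hfac

theorem dehn_twist_factorization_length_div_twelve
    (L : List (Matrix.SpecialLinearGroup (Fin 2) ℤ))
    (hprod : L.prod = 1) (hfac : ∀ g ∈ L, IsConj S g) :
    12 ∣ L.length := by
  have h3 : 3 ∣ L.length := dvd_length_of_prod_eq_one_of_isConj_S
    (charZMod3.comp (SpecialLinearGroup.map (Int.castRingHom _))) (by decide) hprod hfac
  have h4 : 4 ∣ L.length := dvd_length_of_prod_eq_one_of_isConj_S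
    (charZMod4.comp (SpecialLinearGroup.map (Int.castRingHom _))) (by decide) hprod hfac
  exact Nat.Coprime.mul_dvd_of_dvd_of_dvd (by norm_num) h3 h4
end
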